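/- arXiv:1305.3364 — 10 statements merged into one kernel-verified Lean document; each statement's English description precedes it below -/
import Mathlib

section
/- Let a, b, c ≥ 0 and r ≥ 0 be real numbers. Then the infimum of a + b + c − α − β − γ over all triples (α, β, γ) satisfying 0 ≤ α ≤ a, 0 ≤ β ≤ b, 0 ≤ γ ≤ c and min(max(α, γ), max(β, γ)) ≤ r equals (min(a,b) − r)⁺ + (c − r)⁺, where x⁺ denotes max(x, 0). -/
/-- The outage-exponent optimization characterizing the DMT of the
full-duplex `(a,b,c)`-relay channel: the infimum of
`a + b + c − α − β − γ` over the outage region equals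
`(min a b − r)⁺ + (c − r)⁺`. -/
theorem full_duplex_dmt (a b c r : ℝ) (ha : 0 ≤ a) (hb : 0 ≤ b) (hc : 0 ≤ c)
    (hr : 0 ≤ r) :
    sInf {d : ℝ | ∃ α β γ : ℝ,
        0 ≤ α ∧ α ≤ a ∧ 0 ≤ β ∧ β ≤ b ∧ 0 ≤ γ ∧ γ ≤ c ∧
        min (max α γ) (max β γ) ≤ r ∧
        d = a + b + c - α - β - γ} =
      max (min a b - r) 0 + max (c - r) 0 := by
  set S := {d : ℝ | ∃ α β γ : ℝ,
        0 ≤ α ∧ α ≤ a ∧ 0 ≤ β ∧ β ≤ b ∧ 0 ≤ γ ∧ γ ≤ c ∧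
        min (max α γ) (max β γ) ≤ r ∧
        d = a + b + c - α - β - γ} with hS
  have hlb : ∀ d ∈ S, max (min a b - r) 0 + max (c - r) 0 ≤ d := by
    rintro d ⟨α, β, γ, hα0, hαa, hβ0, hβb, hγ0, hγc, hcon, rfl⟩
    rcases min_le_iff.mp hcon with h | h
    · have h1 : α ≤ r := le_of_max_le_left h
      have h2 : γ ≤ r := le_of_max_le_right h
      have hm : min a b ≤ a := min_le_left a b
      have e1 : max (min a b - r) 0 ≤ a - α := max_le (by linarith) (by linarith)
      have e2 : max (c - r) 0 ≤ c - γ := max_le (by linarith) (by linarith)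
      linarith
    · have h1 : β ≤ r := le_of_max_le_left h
      have h2 : γ ≤ r := le_of_max_le_right h
      have hm : min a b ≤ b := min_le_right a b
      have e1 : max (min a b - r) 0 ≤ b - β := max_le (by linarith) (by linarith)
      have e2 : max (c - r) 0 ≤ c - γ := max_le (by linarith) (by linarith)
      linarith
  have hsub : ∀ x : ℝ, x - min x r = max (x - r) 0 := by
    intro x
    rcases le_total x r with h | h
    · simp [min_eq_left h, max_eq_right (by linarith : x - r ≤ (0:ℝ))]
    · simp [min_eq_right h, max_eq_left (by linarith : (0:ℝ) ≤ x - r)]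
  have hmem : max (min a b - r) 0 + max (c - r) 0 ∈ S := by
    rcases le_total a b with h | h
    · refine ⟨min a r, b, min c r, le_min ha hr, min_le_left _ _, hb, le_refl b,
        le_min hc hr, min_le_left _ _, ?_, ?_⟩
      · exact le_trans (min_le_left _ _) (max_le (min_le_right a r) (min_le_right c r))
      · have := hsub a
        have := hsub c
        rw [min_eq_left h]
        linarith
    · refine ⟨a, min b r, min c r, ha, le_refl a, le_min hb hr, min_le_left _ _,
        le_min hc hr, min_le_left _ _, ?_, ?_⟩
      · exact le_trans (min_le_right _ _) (max_le (min_le_right b r) (min_le_right c r))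
      · have := hsub b
        have := hsub c
        rw [min_eq_right h]
        linarith
  exact le_antisymm (csInf_le ⟨_, hlb⟩ hmem) (le_csInf ⟨_, hmem⟩ hlb)
end

section
/- Let a, b, c ≥ 0 and r ≥ 0 be real numbers. Define d_QMF(r) as the infimum of a + b + c − α − β − γ over all triples (α, β, γ) satisfying 0 ≤ α ≤ a, 0 ≤ β ≤ b, 0 ≤ γ ≤ c and min( (1/2)·max(α, γ) + (1/2)·γ , (1/2)·γ + (1/2)·max(β, γ) ) ≤ r. Then d_QMF(r) = (min(a,b) − r)⁺ + (c − r)⁺ if c > min(a,b), and d_QMF(r) = (min(a,b) + c − 2r)⁺ if c ≤ min(a,b), where x⁺ denotes max(x, 0). -/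
/-- Outage exponent of static QMF (listening fraction `1/2`) on the
half-duplex `(a,b,c)`-relay channel. -/
noncomputable def dQMF (a b c r : ℝ) : ℝ :=
  sInf {d : ℝ | ∃ α β γ : ℝ,
    0 ≤ α ∧ α ≤ a ∧ 0 ≤ β ∧ β ≤ b ∧ 0 ≤ γ ∧ γ ≤ c ∧
    min ((1/2) * max α γ + (1/2) * γ) ((1/2) * γ + (1/2) * max β γ) ≤ r ∧
    d = a + b + c - α - β - γ}

lemma dQMF_lower (a b c r : ℝ) (hr : 0 ≤ r) :
    ∀ d ∈ {d : ℝ | ∃ α β γ : ℝ,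
      0 ≤ α ∧ α ≤ a ∧ 0 ≤ β ∧ β ≤ b ∧ 0 ≤ γ ∧ γ ≤ c ∧
      min ((1/2) * max α γ + (1/2) * γ) ((1/2) * γ + (1/2) * max β γ) ≤ r ∧
      d = a + b + c - α - β - γ},
      min a b + c - min (2*r) (min a b + min c r) ≤ d := by
  rintro d ⟨α, β, γ, hα0, hαa, hβ0, hβb, hγ0, hγc, hcon, rfl⟩
  have hγr : γ ≤ r ∧ min α β + γ ≤ 2*r := by
    rcases min_le_iff.mp hcon with h | h
    · constructor <;>
        nlinarith [le_max_left α γ, le_max_right α γ, min_le_left α β]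
    · constructor <;>
        nlinarith [le_max_left β γ, le_max_right β γ, min_le_right α β]
  have h1 : min α β ≤ min a b := min_le_min hαa hβb
  have h2 : max α β ≤ max a b := max_le_max hαa hβb
  have h3 : min α β + max α β = α + β := min_add_max α β
  have h4 : min a b + max a b = a + b := min_add_max a b
  have h5 : γ ≤ min c r := le_min hγc hγr.1
  have h6 : min α β + γ ≤ min (2*r) (min a b + min c r) :=
    le_min hγr.2 (by linarith)
  have h7 : min (2*r) (min a b + min c r) ≤ 2*r := min_le_left _ _
  linarith

lemma dQMF_eq (a b c r : ℝ) (ha : 0 ≤ a) (hb : 0 ≤ b) (hc : 0 ≤ c)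
    (hr : 0 ≤ r) :
    dQMF a b c r = min a b + c - min (2*r) (min a b + min c r) := by
  have hγ0 : 0 ≤ min c r := le_min hc hr
  have hγr : min c r ≤ r := min_le_right c r
  have hγc : min c r ≤ c := min_le_left c r
  apply le_antisymm
  · apply csInf_le ⟨_, dQMF_lower a b c r hr⟩
    rcases le_total a b with hab | hab
    · refine ⟨min a (2*r - min c r), b, min c r,
        le_min ha (by linarith), min_le_left _ _, hb, le_rfl, hγ0, hγc, ?_, ?_⟩
      · refine min_le_of_left_le ?_
        have h1 : min a (2*r - min c r) ≤ 2*r - min c r := min_le_right _ _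
        have h2 : min c r ≤ 2*r - min c r := by linarith
        have := max_le h1 h2
        linarith
      · have hsum : min a (2*r - min c r) + min c r = min (2*r) (a + min c r) := by
          rcases le_total a (2*r - min c r) with h | h
          · rw [min_eq_left h,
              min_eq_right (show a + min c r ≤ 2*r by linarith)]
          · rw [min_eq_right h,
              min_eq_left (show 2*r ≤ a + min c r by linarith)]; ring
        rw [min_eq_left hab]
        linarith
    · refine ⟨a, min b (2*r - min c r), min c r,
        ha, le_rfl, le_min hb (by linarith), min_le_left _ _, hγ0, hγc, ?_, ?_⟩
      · refine min_le_of_right_le ?_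
        have h1 : min b (2*r - min c r) ≤ 2*r - min c r := min_le_right _ _
        have h2 : min c r ≤ 2*r - min c r := by linarith
        have := max_le h1 h2
        linarith
      · have hsum : min b (2*r - min c r) + min c r = min (2*r) (b + min c r) := by
          rcases le_total b (2*r - min c r) with h | h
          · rw [min_eq_left h,
              min_eq_right (show b + min c r ≤ 2*r by linarith)]
          · rw [min_eq_right h,
              min_eq_left (show 2*r ≤ b + min c r by linarith)]; ring
        rw [min_eq_right hab]
        linarith
  · refine le_csInf ⟨a + b + c, 0, 0, 0, le_rfl, ha, le_rfl, hb, le_rfl, hc, ?_, by ring⟩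
      (dQMF_lower a b c r hr)
    simp [hr]

/-- The DMT achieved by static QMF on the half-duplex `(a,b,c)`-relay channel:
`(min(a,b) − r)⁺ + (c − r)⁺` if `c > min(a,b)`, and `(min(a,b) + c − 2r)⁺`
if `c ≤ min(a,b)`. -/
theorem static_qmf_dmt (a b c r : ℝ) (ha : 0 ≤ a) (hb : 0 ≤ b) (hc : 0 ≤ c)
    (hr : 0 ≤ r) :
    (c > min a b → dQMF a b c r = max (min a b - r) 0 + max (c - r) 0) ∧
    (c ≤ min a b → dQMF a b c r = max (min a b + c - 2*r) 0) := by
  rw [dQMF_eq a b c r ha hb hc hr]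
  have hm : 0 ≤ min a b := le_min ha hb
  set m := min a b with hmdef
  constructor <;> intro h <;>
    · simp only [min_def, max_def]
      split_ifs <;> linarith
end

section
/- Let a, b, c ≥ 0 and r ≥ 0 be real numbers. Define d_fd(r) as the infimum of a + b + c − α − β − γ over all (α, β, γ) with 0 ≤ α ≤ a, 0 ≤ β ≤ b, 0 ≤ γ ≤ c and min(max(α, γ), max(β, γ)) ≤ r, and define d_QMF(r) as the infimum of a + b + c − α − β − γ over all (α, β, γ) with 0 ≤ α ≤ a, 0 ≤ β ≤ b, 0 ≤ γ ≤ c and min( (1/2)·max(α, γ) + (1/2)·γ , (1/2)·γ + (1/2)·max(β, γ) ) ≤ r. If c ≥ min(a,b), or if c < min(a,b) and r ≤ c, then d_QMF(r) = d_fd(r). -/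
/-- Outage exponent of the full-duplex `(a,b,c)`-relay channel. -/
noncomputable def dFD (a b c r : ℝ) : ℝ :=
  sInf {d : ℝ | ∃ α β γ : ℝ,
    0 ≤ α ∧ α ≤ a ∧ 0 ≤ β ∧ β ≤ b ∧ 0 ≤ γ ∧ γ ≤ c ∧
    min (max α γ) (max β γ) ≤ r ∧
    d = a + b + c - α - β - γ}

/-- Static QMF achieves the full-duplex DMT whenever `c ≥ min(a,b)`, or
`c < min(a,b)` and `r ≤ c`. -/
theorem static_qmf_achieves_full_duplex (a b c r : ℝ)
    (ha : 0 ≤ a) (hb : 0 ≤ b) (hc : 0 ≤ c) (hr : 0 ≤ r)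
    (hcase : c ≥ min a b ∨ (c < min a b ∧ r ≤ c)) :
    dQMF a b c r = dFD a b c r := by
  set SFD := {d : ℝ | ∃ α β γ : ℝ,
    0 ≤ α ∧ α ≤ a ∧ 0 ≤ β ∧ β ≤ b ∧ 0 ≤ γ ∧ γ ≤ c ∧
    min (max α γ) (max β γ) ≤ r ∧
    d = a + b + c - α - β - γ} with hSFD
  set SQ := {d : ℝ | ∃ α β γ : ℝ,
    0 ≤ α ∧ α ≤ a ∧ 0 ≤ β ∧ β ≤ b ∧ 0 ≤ γ ∧ γ ≤ c ∧
    min ((1/2) * max α γ + (1/2) * γ) ((1/2) * γ + (1/2) * max β γ) ≤ r ∧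
    d = a + b + c - α - β - γ} with hSQ
  have hFDdef : dFD a b c r = sInf SFD := rfl
  have hQdef : dQMF a b c r = sInf SQ := rfl
  have hbddF : BddBelow SFD := by
    refine ⟨0, ?_⟩
    rintro d ⟨α, β, γ, h1, h2, h3, h4, h5, h6, -, rfl⟩
    linarith
  have hbddQ : BddBelow SQ := by
    refine ⟨0, ?_⟩
    rintro d ⟨α, β, γ, h1, h2, h3, h4, h5, h6, -, rfl⟩
    linarith
  have hneF : SFD.Nonempty := by
    refine ⟨a + b + c, 0, 0, 0, le_refl 0, ha, le_refl 0, hb, le_refl 0, hc, ?_, by ring⟩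
    simp [hr]
  have hneQ : SQ.Nonempty := by
    refine ⟨a + b + c, 0, 0, 0, le_refl 0, ha, le_refl 0, hb, le_refl 0, hc, ?_, by ring⟩
    simp [hr]
  have hsub : SFD ⊆ SQ := by
    rintro d ⟨α, β, γ, h1, h2, h3, h4, h5, h6, hmin, rfl⟩
    refine ⟨α, β, γ, h1, h2, h3, h4, h5, h6, ?_, rfl⟩
    refine le_trans (min_le_min ?_ ?_) hmin
    · have := le_max_right α γ; linarith
    · have := le_max_right β γ; linarith
  have hle : dQMF a b c r ≤ dFD a b c r := by
    rw [hFDdef, hQdef]; exact csInf_le_csInf hbddQ hneF hsub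
  have hge : dFD a b c r ≤ dQMF a b c r := by
    rw [hFDdef, hQdef]
    refine le_csInf hneQ ?_
    rintro d ⟨α, β, γ, hα0, hαa, hβ0, hβb, hγ0, hγc, hmin, rfl⟩
    by_cases hrc : r ≤ c
    · rcases min_le_iff.mp hmin with h1 | h1
      · -- branch through the source-relay cut
        have hαm := le_max_left α γ
        have hγm := le_max_right α γ
        have hγr : γ ≤ r := by linarith
        have hαγ : α + γ ≤ 2 * r := by linarith
        have hmem : a + b + c - min α r - β - r ∈ SFD := by
          refine ⟨min α r, β, r, le_min hα0 hr, le_trans (min_le_left _ _) hαa,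
            hβ0, hβb, hr, hrc, ?_, rfl⟩
          have : max (min α r) r = r := max_eq_right (min_le_right α r)
          rw [this]
          exact min_le_left _ _
        have hInf := csInf_le hbddF hmem
        have hsum : α + γ ≤ min α r + r := by
          rcases le_total α r with h | h
          · rw [min_eq_left h]; linarith
          · rw [min_eq_right h]; linarith
        linarith
      · -- branch through the relay-destination cut
        have hβm := le_max_left β γ
        have hγm := le_max_right β γ
        have hγr : γ ≤ r := by linarith
        have hβγ : β + γ ≤ 2 * r := by linarith
        have hmem : a + b + c - α - min β r - r ∈ SFD := by
          refine ⟨α, min β r, r, hα0, hαa, le_min hβ0 hr, le_trans (min_le_left _ _) hβb,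
            hr, hrc, ?_, rfl⟩
          have : max (min β r) r = r := max_eq_right (min_le_right β r)
          rw [this]
          exact min_le_right _ _
        have hInf := csInf_le hbddF hmem
        have hsum : β + γ ≤ min β r + r := by
          rcases le_total β r with h | h
          · rw [min_eq_left h]; linarith
          · rw [min_eq_right h]; linarith
        linarith
    · -- here r > c, so from the hypothesis min a b ≤ c < r and d_FD = 0
      push_neg at hrc
      have hcab : min a b ≤ c := by
        rcases hcase with h | ⟨h, h'⟩
        · exact h
        · linarith
      have hmem : (0 : ℝ) ∈ SFD := by
        refine ⟨a, b, c, ha, le_refl a, hb, le_refl b, hc, le_refl c, ?_, by ring⟩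
        rcases le_total a b with h | h
        · rw [min_eq_left h] at hcab
          calc min (max a c) (max b c) ≤ max a c := min_le_left _ _
            _ = c := max_eq_right hcab
            _ ≤ r := le_of_lt hrc
        · rw [min_eq_right h] at hcab
          calc min (max a c) (max b c) ≤ max b c := min_le_right _ _
            _ = c := max_eq_right hcab
            _ ≤ r := le_of_lt hrc
      have hInf := csInf_le hbddF hmem
      linarith
  linarith
end

section
/- Let a, b, c, r be real numbers with 0 ≤ c < min(a,b), r > 0 and r·(a + b − c) ≤ a·b. Define E1 as the infimum of a + b + c − α − β − γ over all (α, β, γ) with 0 ≤ α ≤ a, 0 ≤ β ≤ b, 0 ≤ γ ≤ c, α < r and γ < r, and define E2 as the infimum of a + b + c − r/t − β − γ over all (t, β, γ) with r/a ≤ t ≤ 1, 0 ≤ β ≤ b, 0 ≤ γ ≤ c and t·γ + (1 − t)·max(γ, β) ≤ r. Then d_DDF(r) := min(E1, E2) satisfies: d_DDF(r) = min(a,b) + c − 2r if 0 < r ≤ min(c, max(a,b)/2); d_DDF(r) = min(a,b) − (max(a,b) − c)·r/(max(a,b) − r) if c < r < max(a,b)/2; and d_DDF(r) = a·b/r − a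 − b + c if r ≥ max(a,b)/2. -/
set_option maxHeartbeats 1000000

lemma ddf_pos_t {a r t : ℝ} (ha : 0 < a) (hr : 0 < r) (hta : r ≤ t * a) : 0 < t := by
  nlinarith

lemma ddf_e2_cert (M c' ρ a b r t β γ : ℝ)
    (ha : 0 < a) (hr : 0 < r) (haM : a ≤ M) (hbM : b ≤ M) (h2r : 2*r ≤ M)
    (hρ : ρ * (M - r) = (M - c') * r)
    (hta : r ≤ t * a) (hβb : β ≤ b) (hγ : γ ≤ c')
    (hcon : t * γ + (1 - t) * β ≤ r) :
    r / t + β + γ ≤ M + c' + ρ := by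
  have ht0 : 0 < t := ddf_pos_t ha hr hta
  have htM : r ≤ t * M := le_trans hta (by nlinarith)
  have hMr : 0 < M - r := by linarith
  have h1 : 0 ≤ r * (r - (t*γ + (1-t)*β)) := mul_nonneg hr.le (by linarith)
  have h2 : 0 ≤ (M - 2*r) * (c' - γ) * t :=
    mul_nonneg (mul_nonneg (by linarith) (by linarith)) ht0.le
  have h3 : 0 ≤ (M*t - r) * (M - β) := mul_nonneg (by linarith) (by linarith)
  have hρt : t * (ρ * (M - r)) = t * ((M - c') * r) := by rw [hρ]
  have key : 0 ≤ (M - r) * ((M + c' + ρ - β - γ) * t - r) := by nlinarith [h1, h2, h3, hρt]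
  have key2 : r ≤ (M + c' + ρ - β - γ) * t := by nlinarith [key, hMr]
  have := (div_le_iff₀ ht0).mpr key2
  linarith

lemma ddf_e2_cert3 (a b r t β γ K : ℝ) (ha : 0 < a) (hr : 0 < r)
    (h2a : a ≤ 2*r) (h2b : b ≤ 2*r) (hK : K * r = a * b)
    (hta : r ≤ t * a) (hβb : β ≤ b) (hcon : t*γ + (1-t)*β ≤ r) :
    r / t + β + γ ≤ 2*a + 2*b - K := by
  have ht0 : 0 < t := ddf_pos_t ha hr hta
  have h2rt : r ≤ 2*r*t := by nlinarith [mul_nonneg ht0.le (show (0:ℝ) ≤ 2*r - a by linarith)]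
  have h1 : 0 ≤ r * (r - (t*γ + (1-t)*β)) := mul_nonneg hr.le (by linarith)
  have h2 : 0 ≤ (2*r*t - r) * (b - β) := mul_nonneg (by linarith) (by linarith)
  have h3 : 0 ≤ (2*r - b) * (a*t - r) := mul_nonneg (by linarith) (by linarith)
  have hKt : t * (K * r) = t * (a * b) := by rw [hK]
  have key : 0 ≤ r * ((2*a + 2*b - K - β - γ) * t - r) := by nlinarith [h1, h2, h3, hKt]
  have key2 : r ≤ (2*a + 2*b - K - β - γ) * t := by nlinarith [key, hr]
  have := (div_le_iff₀ ht0).mpr key2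
  linarith

/-- The DMT achieved by dynamic decode-and-forward on the half-duplex
`(a,b,c)`-relay channel when `c < min(a,b)`. `E1` is the exponent of the
outage event where the relay never decodes and the direct link is too weak;
`E2` is the exponent of the outage event where the relay decodes (listening
for a fraction `t = r/α` of the time, i.e. `α = r/t`) but the cut to the
destination is too weak. -/
theorem ddf_dmt (a b c r : ℝ) (hc0 : 0 ≤ c) (hc : c < min a b) (hr : 0 < r)
    (hreg : r * (a + b - c) ≤ a * b)
    (E1 E2 : ℝ)
    (hE1 : E1 = sInf {d : ℝ | ∃ α β γ : ℝ,
        0 ≤ α ∧ α ≤ a ∧ 0 ≤ β ∧ β ≤ b ∧ 0 ≤ γ ∧ γ ≤ c ∧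
        α < r ∧ γ < r ∧
        d = a + b + c - α - β - γ})
    (hE2 : E2 = sInf {d : ℝ | ∃ t β γ : ℝ,
        r / a ≤ t ∧ t ≤ 1 ∧ 0 ≤ β ∧ β ≤ b ∧ 0 ≤ γ ∧ γ ≤ c ∧
        t * γ + (1 - t) * max γ β ≤ r ∧
        d = a + b + c - r / t - β - γ}) :
    (0 ≤ r ∧ r ≤ min c (max a b / 2) →
        min E1 E2 = min a b + c - 2*r) ∧
    (c < r ∧ r < max a b / 2 →
        min E1 E2 = min a b - (max a b - c) * r / (max a b - r)) ∧
    (max a b / 2 ≤ r →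
        min E1 E2 = a * b / r - a - b + c) := by
  have hca : c < a := lt_of_lt_of_le hc (min_le_left a b)
  have hcb : c < b := lt_of_lt_of_le hc (min_le_right a b)
  have ha0 : 0 < a := lt_of_le_of_lt hc0 hca
  have hb0 : 0 < b := lt_of_le_of_lt hc0 hcb
  have hra : r < a := by nlinarith [mul_pos hr (show 0 < a - c by linarith)]
  have hrb : r < b := by nlinarith [mul_pos hr (show 0 < b - c by linarith)]
  subst hE1 hE2
  set S1 := {d : ℝ | ∃ α β γ : ℝ,
        0 ≤ α ∧ α ≤ a ∧ 0 ≤ β ∧ β ≤ b ∧ 0 ≤ γ ∧ γ ≤ c ∧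
        α < r ∧ γ < r ∧
        d = a + b + c - α - β - γ} with hS1
  set S2 := {d : ℝ | ∃ t β γ : ℝ,
        r / a ≤ t ∧ t ≤ 1 ∧ 0 ≤ β ∧ β ≤ b ∧ 0 ≤ γ ∧ γ ≤ c ∧
        t * γ + (1 - t) * max γ β ≤ r ∧
        d = a + b + c - r / t - β - γ} with hS2
  have hne1 : S1.Nonempty := ⟨a + b + c, 0, 0, 0, le_refl _, ha0.le, le_refl _, hb0.le,
    le_refl _, hc0, hr, hr, by ring⟩
  have hne2 : S2.Nonempty := by
    refine ⟨a + c - r, 1, b, 0, ?_, le_refl _, hb0.le, le_refl _, le_refl _, hc0, ?_, ?_⟩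
    · rw [div_le_one ha0]; exact hra.le
    · simpa using hr.le
    · rw [div_one]; ring
  have hbdd1 : BddBelow S1 := by
    refine ⟨0, ?_⟩
    rintro d ⟨α, β, γ, h1, h2, h3, h4, h5, h6, h7, h8, rfl⟩
    linarith
  have hbdd2 : BddBelow S2 := by
    refine ⟨0, ?_⟩
    rintro d ⟨t, β, γ, ht1, ht2, h3, h4, h5, h6, h7, rfl⟩
    have hta : r ≤ t * a := (div_le_iff₀ ha0).mp ht1
    have ht0 : 0 < t := ddf_pos_t ha0 hr hta
    have : r / t ≤ a := by rw [div_le_iff₀ ht0]; linarith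
    linarith
  -- uniform E1 lower bound
  have hE1ge : a + c - r - min c r ≤ sInf S1 := by
    refine le_csInf hne1 ?_
    rintro d ⟨α, β, γ, h1, h2, h3, h4, h5, h6, h7, h8, rfl⟩
    have : γ ≤ min c r := le_min h6 h8.le
    linarith
  -- E2 lower bounds per regime, uniform in a,b ordering
  have hE2ge1 : ∀ M : ℝ, a ≤ M → b ≤ M → r ≤ c → 2*r ≤ M →
      a + b + c - M - 2*r ≤ sInf S2 := by
    intro M haM hbM hrc h2r
    refine le_csInf hne2 ?_
    rintro d ⟨t, β, γ, ht1, ht2, hβ0, hβb, hγ0, hγc, hcon, rfl⟩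
    have hta : r ≤ t * a := (div_le_iff₀ ha0).mp ht1
    have hbm : (1-t)*β ≤ (1-t)*max γ β :=
      mul_le_mul_of_nonneg_left (le_max_right γ β) (by linarith)
    have hgm : (1-t)*γ ≤ (1-t)*max γ β :=
      mul_le_mul_of_nonneg_left (le_max_left γ β) (by linarith)
    have hcon' : t*γ + (1-t)*β ≤ r := by linarith
    have hγr : γ ≤ r := by nlinarith [hcon, hgm]
    have := ddf_e2_cert M r r a b r t β γ ha0 hr haM hbM h2r (by ring) hta hβb hγr hcon'
    linarith
  have hE2ge2 : ∀ M ρ : ℝ, a ≤ M → b ≤ M → 2*r ≤ M → ρ * (M - r) = (M - c) * r →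
      a + b + c - M - c - ρ ≤ sInf S2 := by
    intro M ρ haM hbM h2r hρ
    refine le_csInf hne2 ?_
    rintro d ⟨t, β, γ, ht1, ht2, hβ0, hβb, hγ0, hγc, hcon, rfl⟩
    have hta : r ≤ t * a := (div_le_iff₀ ha0).mp ht1
    have hbm : (1-t)*β ≤ (1-t)*max γ β :=
      mul_le_mul_of_nonneg_left (le_max_right γ β) (by linarith)
    have hcon' : t*γ + (1-t)*β ≤ r := by linarith
    have := ddf_e2_cert M c ρ a b r t β γ ha0 hr haM hbM h2r hρ hta hβb hγc hcon'
    linarith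
  have hE2ge3 : ∀ K : ℝ, a ≤ 2*r → b ≤ 2*r → K * r = a * b →
      K - a - b + c ≤ sInf S2 := by
    intro K h2a h2b hK
    refine le_csInf hne2 ?_
    rintro d ⟨t, β, γ, ht1, ht2, hβ0, hβb, hγ0, hγc, hcon, rfl⟩
    have hta : r ≤ t * a := (div_le_iff₀ ha0).mp ht1
    have hbm : (1-t)*β ≤ (1-t)*max γ β :=
      mul_le_mul_of_nonneg_left (le_max_right γ β) (by linarith)
    have hcon' : t*γ + (1-t)*β ≤ r := by linarith
    have := ddf_e2_cert3 a b r t β γ K ha0 hr h2a h2b hK hta hβb hcon'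
    linarith
  -- regime 3 is independent of the ordering of a and b; prove it once
  have hR3 : max a b / 2 ≤ r → min (sInf S1) (sInf S2) = a * b / r - a - b + c := by
    intro hrM
    have h2a : a ≤ 2*r := by
      have := le_max_left a b; linarith
    have h2b : b ≤ 2*r := by
      have := le_max_right a b; linarith
    have hK : (a*b/r) * r = a * b := div_mul_cancel₀ _ hr.ne'
    have hE1F : a*b/r - a - b + c ≤ sInf S1 := by
      refine le_trans ?_ hE1ge
      rcases le_total c r with hcr | hrc
      · rw [min_eq_left hcr]
        nlinarith [mul_nonneg (show (0:ℝ) ≤ a - r by linarith) (show (0:ℝ) ≤ 2*r - b by linarith),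
          mul_nonneg hr.le (show (0:ℝ) ≤ r - c by linarith), hK]
      · rw [min_eq_right hrc]
        nlinarith [mul_nonneg (show (0:ℝ) ≤ 2*r - b by linarith)
          (show (0:ℝ) ≤ a - r by linarith), hK]
    have hE2F : a*b/r - a - b + c ≤ sInf S2 := hE2ge3 _ h2a h2b hK
    have hE2le : sInf S2 ≤ a*b/r - a - b + c := by
      apply csInf_le hbdd2
      refine ⟨r/a, b, a + b - a*b/r, le_refl _, by rw [div_le_one ha0]; exact hra.le,
        hb0.le, le_refl _, ?_, ?_, ?_, ?_⟩
      · nlinarith [mul_nonneg (show (0:ℝ) ≤ 2*r - b by linarith) ha0.le,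
          mul_nonneg (show (0:ℝ) ≤ 2*r - a by linarith) hb0.le, hK]
      · nlinarith [hK]
      · have hγb : a + b - a*b/r ≤ b := by nlinarith [hK]
        rw [max_eq_right hγb]
        have : r/a * (a + b - a*b/r) + (1 - r/a) * b = r := by
          field_simp
          ring
        linarith [this.le]
      · have : r / (r/a) = a := by
          rw [div_div_eq_mul_div, mul_comm, mul_div_assoc, div_self hr.ne', mul_one]
        rw [this]; ring
    have hE2eq : sInf S2 = a*b/r - a - b + c := le_antisymm hE2le hE2F
    rw [hE2eq]
    exact min_eq_right hE1F
  rcases le_total a b with hab | hab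
  · -- a ≤ b : min = a, max = b
    rw [min_eq_left hab, max_eq_right hab]
    refine ⟨?_, ?_, fun h => hR3 (by rwa [max_eq_right hab])⟩
    · rintro ⟨hr0, hrm⟩
      have hrc : r ≤ c := le_trans hrm (min_le_left _ _)
      have h2r : 2*r ≤ b := by have := le_trans hrm (min_le_right _ _); linarith
      have hE1F : a + c - 2*r ≤ sInf S1 := by
        rw [min_eq_right hrc] at hE1ge; linarith
      have hE2F : a + c - 2*r ≤ sInf S2 := by
        have := hE2ge1 b hab (le_refl _) hrc h2r; linarith
      have hE2le : sInf S2 ≤ a + c - 2*r := by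
        apply csInf_le hbdd2
        refine ⟨1, b, r, by rw [div_le_one ha0]; exact hra.le, le_refl _,
          hb0.le, le_refl _, hr.le, hrc, ?_, ?_⟩
        · simp
        · rw [div_one]; ring
      have hE2eq : sInf S2 = a + c - 2*r := le_antisymm hE2le hE2F
      rw [hE2eq]
      exact min_eq_right hE1F
    · rintro ⟨hcr, hrM⟩
      have h2r : 2*r < b := by linarith
      have hMr : 0 < b - r := by linarith
      have hbc : 0 < b - c := by linarith
      have hρ : (b-c)*r/(b-r) * (b - r) = (b - c) * r := div_mul_cancel₀ _ hMr.ne'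
      set ρ := (b-c)*r/(b-r) with hρdef
      have hρr : r ≤ ρ := by nlinarith [hρ]
      have hE1F : a - ρ ≤ sInf S1 := by
        rw [min_eq_left hcr.le] at hE1ge; linarith
      have hE2F : a - ρ ≤ sInf S2 := by
        have := hE2ge2 b ρ hab (le_refl _) h2r.le hρ; linarith
      have hE2le : sInf S2 ≤ a - ρ := by
        apply csInf_le hbdd2
        refine ⟨(b-r)/(b-c), b, c, ?_, ?_, hb0.le, le_refl _, hc0, le_refl _, ?_, ?_⟩
        · rw [div_le_div_iff₀ ha0 hbc]; nlinarith
        · rw [div_le_one hbc]; linarith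
        · rw [max_eq_right hcb.le]
          have : (b-r)/(b-c) * c + (1 - (b-r)/(b-c)) * b = r := by
            field_simp
            ring
          linarith [this.le]
        · have : r / ((b-r)/(b-c)) = ρ := by
            rw [hρdef, div_div_eq_mul_div]
            ring_nf
          rw [this]; ring
      have hE2eq : sInf S2 = a - ρ := le_antisymm hE2le hE2F
      rw [hE2eq]
      exact min_eq_right hE1F
  · -- b ≤ a : min = b, max = a
    rw [min_eq_right hab, max_eq_left hab]
    refine ⟨?_, ?_, fun h => hR3 (by rwa [max_eq_left hab])⟩
    · rintro ⟨hr0, hrm⟩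
      have hrc : r ≤ c := le_trans hrm (min_le_left _ _)
      have h2r : 2*r ≤ a := by have := le_trans hrm (min_le_right _ _); linarith
      have hE1F : b + c - 2*r ≤ sInf S1 := by
        rw [min_eq_right hrc] at hE1ge; linarith
      have hE2F : b + c - 2*r ≤ sInf S2 := by
        have := hE2ge1 a (le_refl _) hab hrc h2r; linarith
      have hE2le : sInf S2 ≤ b + c - 2*r := by
        apply csInf_le hbdd2
        refine ⟨r/a, r, r, le_refl _, by rw [div_le_one ha0]; exact hra.le,
          hr.le, hrb.le, hr.le, hrc, ?_, ?_⟩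
        · rw [max_self]
          have : r/a * r + (1 - r/a) * r = r := by ring
          linarith [this.le]
        · have : r / (r/a) = a := by
            rw [div_div_eq_mul_div, mul_comm, mul_div_assoc, div_self hr.ne', mul_one]
          rw [this]; ring
      have hE2eq : sInf S2 = b + c - 2*r := le_antisymm hE2le hE2F
      rw [hE2eq]
      exact min_eq_right hE1F
    · rintro ⟨hcr, hrM⟩
      have h2r : 2*r < a := by linarith
      have hMr : 0 < a - r := by linarith
      have hac : 0 < a - c := by linarith
      have hρ : (a-c)*r/(a-r) * (a - r) = (a - c) * r := div_mul_cancel₀ _ hMr.ne'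
      set ρ := (a-c)*r/(a-r) with hρdef
      have hρr : r ≤ ρ := by nlinarith [hρ]
      have hE1F : b - ρ ≤ sInf S1 := by
        rw [min_eq_left hcr.le] at hE1ge; linarith
      have hE2F : b - ρ ≤ sInf S2 := by
        have := hE2ge2 a ρ (le_refl _) hab h2r.le hρ; linarith
      have hE2le : sInf S2 ≤ b - ρ := by
        apply csInf_le hbdd2
        refine ⟨r/a, (a-c)*r/(a-r), c, le_refl _, by rw [div_le_one ha0]; exact hra.le,
          ?_, ?_, hc0, le_refl _, ?_, ?_⟩
        · positivity
        · rw [div_le_iff₀ hMr]; nlinarith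
        · have hcβ : c ≤ (a-c)*r/(a-r) := by
            rw [le_div_iff₀ hMr]; nlinarith
          rw [max_eq_right hcβ]
          have : r/a * c + (1 - r/a) * ((a-c)*r/(a-r)) = r := by
            field_simp
            ring
          linarith [this.le]
        · have h1 : r / (r/a) = a := by
            rw [div_div_eq_mul_div, mul_comm, mul_div_assoc, div_self hr.ne', mul_one]
          rw [h1, hρdef]; ring
      have hE2eq : sInf S2 = b - ρ := le_antisymm hE2le hE2F
      rw [hE2eq]
      exact min_eq_right hE1F
end

section
/- Let p, c, r be real numbers with 0 ≤ c < p and p/2 ≤ r ≤ (p + c)/2. Then the infimum of 2p + c − α − β − γ over the set O(r) = { (α, β, γ) : 0 ≤ α ≤ p, 0 ≤ β ≤ p, 0 ≤ γ ≤ c, γ < min(α, β), (α·β − γ²)/(α + β − 2γ) ≤ r } equals exactly p + c − 2r. -/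
lemma lb_outage (p c r α β γ : ℝ) (hcp : c < p) (hr1 : p/2 ≤ r) (hr2 : r ≤ (p + c)/2)
    (h1 : 0 ≤ α) (h2 : α ≤ p) (h3 : 0 ≤ β) (h4 : β ≤ p) (h5 : 0 ≤ γ) (h6 : γ ≤ c)
    (hγa : γ < α) (hγb : γ < β)
    (hcon : α * β - γ^2 ≤ r * (α + β - 2*γ)) :
    α + β + γ ≤ p + 2*r := by
  rcases le_or_gt α r with hα | hα
  · nlinarith
  rcases le_or_gt β r with hβ | hβ
  · nlinarith
  have hγr : γ < r := by
    by_contra h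
    push_neg at h
    nlinarith [mul_pos (show (0:ℝ) < α - γ by linarith) (show (0:ℝ) < β - γ by linarith),
      mul_nonneg (show (0:ℝ) ≤ γ - r by linarith) (show (0:ℝ) ≤ γ - r by linarith),
      mul_pos (show (0:ℝ) < α - r by nlinarith) (show (0:ℝ) < β - r by nlinarith)]
  rcases le_or_gt (α - r) (r - γ) with hx | hx
  · linarith
  · nlinarith [mul_pos (show (0:ℝ) < α - r by linarith) (show (0:ℝ) < β - r by linarith)]

/-- For `p/2 ≤ r ≤ (p+c)/2`, the infimum of `2p + c − α − β − γ` over the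
global-CSI outage region of the symmetric half-duplex relay channel equals
exactly `p + c − 2r`: static QMF is DMT-optimal in this regime. -/
theorem global_csi_outage_exponent (p c r : ℝ)
    (hc0 : 0 ≤ c) (hcp : c < p) (hr1 : p/2 ≤ r) (hr2 : r ≤ (p + c)/2) :
    sInf {d : ℝ | ∃ α β γ : ℝ,
        0 ≤ α ∧ α ≤ p ∧ 0 ≤ β ∧ β ≤ p ∧ 0 ≤ γ ∧ γ ≤ c ∧
        γ < min α β ∧ (α * β - γ^2) / (α + β - 2*γ) ≤ r ∧
        d = 2*p + c - α - β - γ} = p + c - 2*r := by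
  have hrp : r < p := by linarith
  have hmem : (p + c - 2*r) ∈ {d : ℝ | ∃ α β γ : ℝ,
        0 ≤ α ∧ α ≤ p ∧ 0 ≤ β ∧ β ≤ p ∧ 0 ≤ γ ∧ γ ≤ c ∧
        γ < min α β ∧ (α * β - γ^2) / (α + β - 2*γ) ≤ r ∧
        d = 2*p + c - α - β - γ} := by
    refine ⟨p, p, 2*r - p, by linarith, le_refl p, by linarith, le_refl p,
      by linarith, by linarith, by simp [lt_min_iff]; linarith, ?_, by ring⟩
    have hden : p + p - 2*(2*r - p) = 4*(p - r) := by ring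
    rw [hden, div_le_iff₀ (by linarith)]
    nlinarith
  have hlb : ∀ d ∈ {d : ℝ | ∃ α β γ : ℝ,
        0 ≤ α ∧ α ≤ p ∧ 0 ≤ β ∧ β ≤ p ∧ 0 ≤ γ ∧ γ ≤ c ∧
        γ < min α β ∧ (α * β - γ^2) / (α + β - 2*γ) ≤ r ∧
        d = 2*p + c - α - β - γ}, p + c - 2*r ≤ d := by
    rintro d ⟨α, β, γ, h1, h2, h3, h4, h5, h6, h7, h8, rfl⟩
    rw [lt_min_iff] at h7
    have hden : (0:ℝ) < α + β - 2*γ := by linarith [h7.1, h7.2]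
    rw [div_le_iff₀ hden] at h8
    have := lb_outage p c r α β γ hcp hr1 hr2 h1 h2 h3 h4 h5 h6 h7.1 h7.2 h8
    linarith
  exact le_antisymm (csInf_le ⟨p + c - 2*r, hlb⟩ hmem) (le_csInf ⟨_, hmem⟩ hlb)
end

section
/- Let p, c, r be real numbers with 0 ≤ c < r < p/2. For every t ∈ [0,1], the infimum of p + c − β − γ over all pairs (β, γ) with 0 ≤ β ≤ p, 0 ≤ γ ≤ c and min( t·p + (1 − t)·γ , t·γ + (1 − t)·max(β, γ) ) ≤ r is at most p − (p − c)·r/(p − r). Consequently, the supremum over t ∈ [0,1] of this infimum is at most p − (p − c)·r/(p − r). -/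
/-- Upper bound on the CSIR DMT of the half-duplex `(p,p,c)`-relay channel for
`c < r < p/2`: fixing the source-relay exponent to `α = p`, for every listening
fraction `t ∈ [0,1]` the adversarial choice of `(β,γ)` forces the outage
exponent down to at most `p − (p−c)r/(p−r)`; hence so is the supremum over `t`. -/
theorem csir_upper_bound (p c r : ℝ) (hc0 : 0 ≤ c) (hcr : c < r) (hrp : r < p/2) :
    (∀ t ∈ Set.Icc (0:ℝ) 1,
        sInf {d : ℝ | ∃ β γ : ℝ,
            0 ≤ β ∧ β ≤ p ∧ 0 ≤ γ ∧ γ ≤ c ∧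
            min (t * p + (1 - t) * γ) (t * γ + (1 - t) * max β γ) ≤ r ∧
            d = p + c - β - γ} ≤ p - (p - c) * r / (p - r)) ∧
    sSup {s : ℝ | ∃ t ∈ Set.Icc (0:ℝ) 1,
        s = sInf {d : ℝ | ∃ β γ : ℝ,
            0 ≤ β ∧ β ≤ p ∧ 0 ≤ γ ∧ γ ≤ c ∧
            min (t * p + (1 - t) * γ) (t * γ + (1 - t) * max β γ) ≤ r ∧
            d = p + c - β - γ}} ≤ p - (p - c) * r / (p - r) := by
  have hr0 : 0 < r := lt_of_le_of_lt hc0 hcr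
  have hp2 : 2 * r < p := by linarith
  have hp0 : 0 < p := by linarith
  have hpr : 0 < p - r := by linarith
  have hpc : 0 < p - c := by linarith
  have hB : c ≤ p - (p - c) * r / (p - r) := by
    have h : (p - c) * r / (p - r) ≤ p - c := by
      rw [div_le_iff₀ hpr]; nlinarith
    linarith
  have key : ∀ t ∈ Set.Icc (0:ℝ) 1,
      sInf {d : ℝ | ∃ β γ : ℝ,
          0 ≤ β ∧ β ≤ p ∧ 0 ≤ γ ∧ γ ≤ c ∧
          min (t * p + (1 - t) * γ) (t * γ + (1 - t) * max β γ) ≤ r ∧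
          d = p + c - β - γ} ≤ p - (p - c) * r / (p - r) := by
    intro t ht
    obtain ⟨ht0, ht1⟩ := ht
    have hbdd : BddBelow {d : ℝ | ∃ β γ : ℝ,
        0 ≤ β ∧ β ≤ p ∧ 0 ≤ γ ∧ γ ≤ c ∧
        min (t * p + (1 - t) * γ) (t * γ + (1 - t) * max β γ) ≤ r ∧
        d = p + c - β - γ} := by
      refine ⟨0, fun d hd => ?_⟩
      obtain ⟨β, γ, hβ0, hβp, hγ0, hγc, _, hd⟩ := hd
      linarith [hd.ge, hd.le]
    by_cases h1 : t * p ≤ r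
    · -- β = p, γ = 0, d = c
      have hmem : c ∈ {d : ℝ | ∃ β γ : ℝ,
          0 ≤ β ∧ β ≤ p ∧ 0 ≤ γ ∧ γ ≤ c ∧
          min (t * p + (1 - t) * γ) (t * γ + (1 - t) * max β γ) ≤ r ∧
          d = p + c - β - γ} := by
        refine ⟨p, 0, le_of_lt hp0, le_refl p, le_refl 0, hc0, ?_, by ring⟩
        exact le_trans (min_le_left _ _) (by simpa using h1)
      exact le_trans (csInf_le hbdd hmem) hB
    · push_neg at h1
      by_cases h2 : t * (p - c) ≤ p - r
      · -- middle regime: γ = c, β = (r - t*c)/(1 - t)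
        have ht1' : t < 1 := by nlinarith
        have h1t : 0 < 1 - t := by linarith
        set β := (r - t * c) / (1 - t) with hβdef
        have hcβ : c ≤ β := by
          rw [le_div_iff₀ h1t]; nlinarith
        have hβp : β ≤ p := by
          rw [div_le_iff₀ h1t]; nlinarith
        have hβ0 : 0 ≤ β := le_trans hc0 hcβ
        have hmem : (p + c - β - c) ∈ {d : ℝ | ∃ β γ : ℝ,
            0 ≤ β ∧ β ≤ p ∧ 0 ≤ γ ∧ γ ≤ c ∧
            min (t * p + (1 - t) * γ) (t * γ + (1 - t) * max β γ) ≤ r ∧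
            d = p + c - β - γ} := by
          refine ⟨β, c, hβ0, hβp, hc0, le_refl c, ?_, rfl⟩
          refine le_trans (min_le_right _ _) ?_
          rw [max_eq_left hcβ, hβdef, mul_comm (1 - t),
            div_mul_cancel₀ _ (ne_of_gt h1t)]
          linarith
        refine le_trans (csInf_le hbdd hmem) ?_
        have hβlb : (p - c) * r / (p - r) ≤ β := by
          rw [div_le_div_iff₀ hpr h1t]
          nlinarith
        linarith
      · -- large t: β = p, γ = c, d = 0
        push_neg at h2
        have hmem : (0:ℝ) ∈ {d : ℝ | ∃ β γ : ℝ,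
            0 ≤ β ∧ β ≤ p ∧ 0 ≤ γ ∧ γ ≤ c ∧
            min (t * p + (1 - t) * γ) (t * γ + (1 - t) * max β γ) ≤ r ∧
            d = p + c - β - γ} := by
          refine ⟨p, c, le_of_lt hp0, le_refl p, hc0, le_refl c, ?_, by ring⟩
          refine le_trans (min_le_right _ _) ?_
          rw [max_eq_left (by linarith : c ≤ p)]
          nlinarith
        exact le_trans (csInf_le hbdd hmem) (by linarith)
    
  refine ⟨key, ?_⟩
  apply Real.sSup_le
  · rintro s ⟨t, ht, rfl⟩
    exact key t ht
  · linarith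
end

section
/- Let r be a real number with 0 < r < 1/2. For α, γ ∈ [0,1] define t₁ = 1 − α(1 − r) and t₂ = 1 − γ(1 − r). Then the infimum of 4 − α − β − γ − δ over all (α, β, γ, δ) ∈ [0,1]⁴ satisfying min( t₁·α + t₂·γ , t₁·α + (1 − t₂)·δ , t₂·γ + (1 − t₁)·β , (1 − t₁)·β + (1 − t₂)·δ ) < r equals 2 − r/(1 − r). -/
/-- Outage-exponent optimization for dynamic QMF on the half-duplex parallel
relay channel with listening fractions `t₁ = 1 − α(1−r)`, `t₂ = 1 − γ(1−r)`:
for `0 < r < 1/2`, the infimum of `4 − α − β − γ − δ` over the outage region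
equals `2 − r/(1−r)`. -/
theorem dynamic_qmf_parallel_relay (r : ℝ) (hr0 : 0 < r) (hr : r < 1/2) :
    sInf {d : ℝ | ∃ α β γ δ : ℝ,
        α ∈ Set.Icc (0:ℝ) 1 ∧ β ∈ Set.Icc (0:ℝ) 1 ∧
        γ ∈ Set.Icc (0:ℝ) 1 ∧ δ ∈ Set.Icc (0:ℝ) 1 ∧
        min (min ((1 - α*(1-r)) * α + (1 - γ*(1-r)) * γ)
                 ((1 - α*(1-r)) * α + (1 - (1 - γ*(1-r))) * δ))
            (min ((1 - γ*(1-r)) * γ + (1 - (1 - α*(1-r))) * β)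
                 ((1 - (1 - α*(1-r))) * β + (1 - (1 - γ*(1-r))) * δ)) < r ∧
        d = 4 - α - β - γ - δ} = 2 - r / (1 - r) := by
  have hr1 : (0:ℝ) < 1 - r := by linarith
  set c : ℝ := r / (1 - r) with hc
  have hcr : c * (1 - r) = r := div_mul_cancel₀ _ hr1.ne'
  have hc0 : 0 < c := div_pos hr0 hr1
  have hc1 : c < 1 := by rw [hc, div_lt_one hr1]; linarith
  have hbdd : BddBelow {d : ℝ | ∃ α β γ δ : ℝ,
        α ∈ Set.Icc (0:ℝ) 1 ∧ β ∈ Set.Icc (0:ℝ) 1 ∧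
        γ ∈ Set.Icc (0:ℝ) 1 ∧ δ ∈ Set.Icc (0:ℝ) 1 ∧
        min (min ((1 - α*(1-r)) * α + (1 - γ*(1-r)) * γ)
                 ((1 - α*(1-r)) * α + (1 - (1 - γ*(1-r))) * δ))
            (min ((1 - γ*(1-r)) * γ + (1 - (1 - α*(1-r))) * β)
                 ((1 - (1 - α*(1-r))) * β + (1 - (1 - γ*(1-r))) * δ)) < r ∧
        d = 4 - α - β - γ - δ} := by
    refine ⟨0, ?_⟩
    rintro d ⟨α, β, γ, δ, ⟨hα0, hα1⟩, ⟨hβ0, hβ1⟩, ⟨hγ0, hγ1⟩, ⟨hδ0, hδ1⟩, _, rfl⟩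
    linarith
  have hne : Set.Nonempty {d : ℝ | ∃ α β γ δ : ℝ,
        α ∈ Set.Icc (0:ℝ) 1 ∧ β ∈ Set.Icc (0:ℝ) 1 ∧
        γ ∈ Set.Icc (0:ℝ) 1 ∧ δ ∈ Set.Icc (0:ℝ) 1 ∧
        min (min ((1 - α*(1-r)) * α + (1 - γ*(1-r)) * γ)
                 ((1 - α*(1-r)) * α + (1 - (1 - γ*(1-r))) * δ))
            (min ((1 - γ*(1-r)) * γ + (1 - (1 - α*(1-r))) * β)
                 ((1 - (1 - α*(1-r))) * β + (1 - (1 - γ*(1-r))) * δ)) < r ∧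
        d = 4 - α - β - γ - δ} := by
    refine ⟨2, 0, 1, 0, 1, ⟨le_refl 0, by norm_num⟩, ⟨by norm_num, le_refl 1⟩,
      ⟨le_refl 0, by norm_num⟩, ⟨by norm_num, le_refl 1⟩, ?_, by ring⟩
    refine lt_of_le_of_lt (min_le_right _ _) (lt_of_le_of_lt (min_le_right _ _) ?_)
    simp only [sub_zero, mul_zero, zero_mul, sub_self]
    linarith
  apply le_antisymm
  · rw [Real.sInf_le_iff hbdd hne]
    intro ε hε
    set m : ℝ := min (ε/3) (c/4) with hm
    have hm0 : 0 < m := lt_min (by linarith) (by linarith)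
    have hmε : m ≤ ε/3 := min_le_left _ _
    have hmc : m ≤ c/4 := min_le_right _ _
    set a : ℝ := c/2 - m with ha
    have ha0 : 0 ≤ a := by simp only [ha]; linarith
    have ha1 : a ≤ 1 := by simp only [ha]; linarith
    refine ⟨2 - c + 2*m, ⟨a, 1, a, 1, ⟨ha0, ha1⟩, ⟨by norm_num, le_refl 1⟩,
      ⟨ha0, ha1⟩, ⟨by norm_num, le_refl 1⟩, ?_, by ring⟩, by linarith⟩
    refine lt_of_le_of_lt (min_le_right _ _) (lt_of_le_of_lt (min_le_right _ _) ?_)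
    have : (1 - (1 - a*(1-r))) * 1 + (1 - (1 - a*(1-r))) * 1 = 2*a*(1-r) := by ring
    rw [this]
    have : 2*a*(1-r) = r - 2*m*(1-r) := by
      have : 2*a = c - 2*m := by simp only [ha]; ring
      rw [this]; nlinarith [hcr]
    rw [this]
    nlinarith [hm0, hr1]
  · apply le_csInf hne
    rintro d ⟨α, β, γ, δ, ⟨hα0, hα1⟩, ⟨hβ0, hβ1⟩, ⟨hγ0, hγ1⟩, ⟨hδ0, hδ1⟩, hmin, rfl⟩
    -- key lemma: if x ∈ [0,1] and (1 - x(1-r))x < r then (1-r)x < r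
    have key : ∀ x : ℝ, 0 ≤ x → x ≤ 1 → (1 - x*(1-r)) * x < r → (1-r)*x < r := by
      intro x hx0 hx1 hfx
      by_contra h
      push_neg at h
      nlinarith [mul_nonneg (by linarith : (0:ℝ) ≤ (1-r)*x - r) (by linarith : (0:ℝ) ≤ 1 - x)]
    have hfge : ∀ x : ℝ, 0 ≤ x → (1-r)*x < r → (1-r)*x ≤ (1 - x*(1-r)) * x := by
      intro x hx0 h
      nlinarith [mul_nonneg hx0 (by linarith : (0:ℝ) ≤ r - (1-r)*x)]
    have hfpos : ∀ x : ℝ, 0 ≤ x → x ≤ 1 → 0 ≤ (1 - x*(1-r)) * x := by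
      intro x hx0 hx1
      apply mul_nonneg _ hx0
      nlinarith
    rcases min_lt_iff.mp hmin with h | h <;> rcases min_lt_iff.mp h with h' | h'
    · -- f(α) + f(γ) < r
      have hfα : (1 - α*(1-r)) * α < r := by
        have := hfpos γ hγ0 hγ1; linarith
      have hfγ : (1 - γ*(1-r)) * γ < r := by
        have := hfpos α hα0 hα1; linarith
      have h1 := key α hα0 hα1 hfα
      have h2 := key γ hγ0 hγ1 hfγ
      have h3 := hfge α hα0 h1
      have h4 := hfge γ hγ0 h2
      have e : (α+γ)*(1-r) = (1-r)*α + (1-r)*γ := by ring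
      have hlt : (α+γ)*(1-r) < c*(1-r) := by rw [e, hcr]; linarith
      have hαγ : α + γ < c := lt_of_mul_lt_mul_right hlt (le_of_lt hr1)
      linarith
    · -- f(α) + γ(1-r)δ < r
      have e : (1 - (1 - γ*(1-r))) * δ = (1-r)*(γ*δ) := by ring
      rw [e] at h'
      have hγδ : 0 ≤ (1-r)*(γ*δ) := by positivity
      have hfα : (1 - α*(1-r)) * α < r := by linarith
      have h1 := key α hα0 hα1 hfα
      have h3 := hfge α hα0 h1
      have e2 : (α + γ*δ)*(1-r) = (1-r)*α + (1-r)*(γ*δ) := by ring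
      have hlt : (α + γ*δ)*(1-r) < c*(1-r) := by rw [e2, hcr]; linarith
      have hsum : α + γ*δ < c := lt_of_mul_lt_mul_right hlt (le_of_lt hr1)
      have hp : (0:ℝ) ≤ (1-γ)*(1-δ) :=
        mul_nonneg (by linarith) (by linarith)
      nlinarith [hp]
    · -- f(γ) + α(1-r)β < r
      have e : (1 - (1 - α*(1-r))) * β = (1-r)*(α*β) := by ring
      rw [e] at h'
      have hαβ : 0 ≤ (1-r)*(α*β) := by positivity
      have hfγ : (1 - γ*(1-r)) * γ < r := by linarith
      have h1 := key γ hγ0 hγ1 hfγ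
      have h3 := hfge γ hγ0 h1
      have e2 : (γ + α*β)*(1-r) = (1-r)*γ + (1-r)*(α*β) := by ring
      have hlt : (γ + α*β)*(1-r) < c*(1-r) := by rw [e2, hcr]; linarith
      have hsum : γ + α*β < c := lt_of_mul_lt_mul_right hlt (le_of_lt hr1)
      have hp : (0:ℝ) ≤ (1-α)*(1-β) :=
        mul_nonneg (by linarith) (by linarith)
      nlinarith [hp]
    · -- α(1-r)β + γ(1-r)δ < r
      have e : (1 - (1 - α*(1-r))) * β + (1 - (1 - γ*(1-r))) * δ
          = (1-r)*(α*β) + (1-r)*(γ*δ) := by ring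
      rw [e] at h'
      have e2 : (α*β + γ*δ)*(1-r) = (1-r)*(α*β) + (1-r)*(γ*δ) := by ring
      have hlt : (α*β + γ*δ)*(1-r) < c*(1-r) := by rw [e2, hcr]; linarith
      have hsum : α*β + γ*δ < c := lt_of_mul_lt_mul_right hlt (le_of_lt hr1)
      have hp1 : (0:ℝ) ≤ (1-α)*(1-β) :=
        mul_nonneg (by linarith) (by linarith)
      have hp2 : (0:ℝ) ≤ (1-γ)*(1-δ) :=
        mul_nonneg (by linarith) (by linarith)
      nlinarith [hp1, hp2]
end

section
/- Let r be a real number with 0 < r ≤ 1. Then the infimum of 4 − α − β − γ − δ over all (α, β, γ, δ) ∈ [0,1]⁴ satisfying (1/2)·min( α + γ , α + δ , γ + β , β + δ ) < r equals 2 − 2r. -/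
/-- Outage-exponent optimization for static QMF (both relays listen half the
time) on the half-duplex parallel relay channel: for `0 < r ≤ 1`, the infimum
of `4 − α − β − γ − δ` over the outage region equals `2 − 2r`. -/
theorem static_qmf_parallel_relay (r : ℝ) (hr0 : 0 < r) (hr : r ≤ 1) :
    sInf {d : ℝ | ∃ α β γ δ : ℝ,
        α ∈ Set.Icc (0:ℝ) 1 ∧ β ∈ Set.Icc (0:ℝ) 1 ∧
        γ ∈ Set.Icc (0:ℝ) 1 ∧ δ ∈ Set.Icc (0:ℝ) 1 ∧
        (1/2) * min (min (α + γ) (α + δ)) (min (γ + β) (β + δ)) < r ∧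
        d = 4 - α - β - γ - δ} = 2 - 2*r := by
  set S := {d : ℝ | ∃ α β γ δ : ℝ,
        α ∈ Set.Icc (0:ℝ) 1 ∧ β ∈ Set.Icc (0:ℝ) 1 ∧
        γ ∈ Set.Icc (0:ℝ) 1 ∧ δ ∈ Set.Icc (0:ℝ) 1 ∧
        (1/2) * min (min (α + γ) (α + δ)) (min (γ + β) (β + δ)) < r ∧
        d = 4 - α - β - γ - δ} with hS
  have hlb : ∀ d ∈ S, 2 - 2*r ≤ d := by
    rintro d ⟨α, β, γ, δ, ⟨hα0, hα1⟩, ⟨hβ0, hβ1⟩, ⟨hγ0, hγ1⟩, ⟨hδ0, hδ1⟩, hmin, rfl⟩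
    have hm : α + β + γ + δ - 2 ≤
        min (min (α + γ) (α + δ)) (min (γ + β) (β + δ)) := by
      simp only [le_min_iff]
      refine ⟨⟨by linarith, by linarith⟩, by linarith, by linarith⟩
    linarith [hmin, hm]
  have hne : S.Nonempty := by
    refine ⟨4, 0, 0, 0, 0, ?_, ?_, ?_, ?_, ?_, by ring⟩ <;>
      simp [Set.mem_Icc, hr0]
  have hbdd : BddBelow S := ⟨2 - 2*r, hlb⟩
  refine le_antisymm ?_ (le_csInf hne hlb)
  rw [Real.sInf_le_iff hbdd hne]
  intro ε hε
  obtain ⟨t, ht0, ht1, htr, htε⟩ :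
      ∃ t : ℝ, 0 ≤ t ∧ t ≤ 1 ∧ t < r ∧ r - t < ε/2 := by
    refine ⟨max (r - ε/4) 0, le_max_right _ _, ?_, ?_, ?_⟩
    · exact max_le (by linarith) (by linarith)
    · exact max_lt (by linarith) hr0
    · rcases le_or_gt (r - ε/4) 0 with h | h
      · rw [max_eq_right h]; linarith
      · rw [max_eq_left h.le]; linarith
  refine ⟨2 - 2*t, ⟨1, t, t, 1, ?_, ⟨ht0, ht1⟩, ⟨ht0, ht1⟩, ?_, ?_, by ring⟩, ?_⟩
  · exact ⟨zero_le_one, le_refl 1⟩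
  · exact ⟨zero_le_one, le_refl 1⟩
  · set m := min (min (1 + t) (1 + 1)) (min (t + t) (t + 1)) with hm
    have h1 : m ≤ t + t := le_trans (min_le_right _ _) (min_le_left _ _)
    linarith
  · linarith
end

section
/- Let r be a real number with 0 ≤ r ≤ 1/2. Define f(x,y) = x·y/(x + y) for x + y > 0 and f(0,0) = 0. Then the infimum of 4 − α − β − γ − δ over all (α, β, γ, δ) ∈ [0,1]⁴ satisfying f(α, β) + f(γ, δ) ≤ r equals 2 − r/(1 − r). -/
/-!
Since `(x + y)(1 - f(x, y)) = 1 - (1 - x)(1 - y) ≤ 1` on `[0,1]²`, each relay branch with rate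
`s = f(α, β)` has `α + β ≤ 1/(1 - s)`. The function `u ↦ 1/(1 - u)` is convex, increasing and equals
`1` at `0`, so `s + t ≤ r` gives `1/(1 - s) + 1/(1 - t) ≤ 1 + 1/(1 - r)`, i.e.
`α + β + γ + δ ≤ 2 + r/(1 - r)`. Equality is attained by `(1, r/(1 - r), 1, 0)`,
which lies in the cube exactly when `r ≤ 1/2`.
-/

/-- `f x y = xy/(x+y)` for `x + y > 0`, and `f 0 0 = 0`. -/
noncomputable def cutRate (x y : ℝ) : ℝ := if 0 < x + y then x * y / (x + y) else 0

lemma cutRate_nonneg {x y : ℝ} (hx : 0 ≤ x) (hy : 0 ≤ y) : 0 ≤ cutRate x y := by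
  unfold cutRate
  split_ifs <;> positivity

lemma cutRate_zero_right (x : ℝ) : cutRate x 0 = 0 := by
  simp [cutRate]

lemma cutRate_one_left_div_one_sub {r : ℝ} (hr0 : 0 ≤ r) (hr1 : r < 1) :
    cutRate 1 (r / (1 - r)) = r := by
  have hpos : 0 < 1 - r := by linarith
  rw [cutRate, if_pos (by positivity)]
  field_simp
  ring

lemma add_mul_one_sub_cutRate_le_one {x y : ℝ} (hx : x ≤ 1) (hy : y ≤ 1) :
    (x + y) * (1 - cutRate x y) ≤ 1 := by
  unfold cutRate
  split_ifs with h
  · have : (x + y) * (1 - x * y / (x + y)) = 1 - (1 - x) * (1 - y) := by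
      field_simp
      ring
    nlinarith [mul_nonneg (sub_nonneg.2 hx) (sub_nonneg.2 hy)]
  · linarith

lemma add_le_inv_one_sub_cutRate {x y : ℝ} (hx : x ≤ 1) (hy : y ≤ 1) (h : cutRate x y < 1) :
    x + y ≤ (1 - cutRate x y)⁻¹ := by
  rw [← one_div, le_div_iff₀ (by linarith)]
  exact add_mul_one_sub_cutRate_le_one hx hy

lemma inv_one_sub_add_inv_one_sub_le {s t : ℝ} (hs : 0 ≤ s) (ht : 0 ≤ t) (hst : s + t < 1) :
    (1 - s)⁻¹ + (1 - t)⁻¹ ≤ 1 + (1 - (s + t))⁻¹ := by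
  have hs1 : 0 < 1 - s := by linarith
  have ht1 : 0 < 1 - t := by linarith
  have hst1 : 0 < 1 - (s + t) := by linarith
  rw [inv_add_inv hs1.ne' ht1.ne', ← one_div, one_add_div hst1.ne',
    div_le_div_iff₀ (by positivity) hst1]
  nlinarith [mul_nonneg (mul_nonneg hs ht) (add_nonneg hs ht), mul_nonneg hs ht]

lemma add_add_add_le_of_cutRate_add_cutRate_le {α β γ δ r : ℝ}
    (hα : α ≤ 1) (hβ : β ≤ 1) (hγ : γ ≤ 1) (hδ : δ ≤ 1)
    (hs : 0 ≤ cutRate α β) (ht : 0 ≤ cutRate γ δ) (hr : r < 1)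
    (hcut : cutRate α β + cutRate γ δ ≤ r) :
    α + β + γ + δ ≤ 2 + r / (1 - r) := by
  set s := cutRate α β
  set t := cutRate γ δ
  have hαβ := add_le_inv_one_sub_cutRate hα hβ (by linarith)
  have hγδ := add_le_inv_one_sub_cutRate hγ hδ (by linarith)
  have hconv := inv_one_sub_add_inv_one_sub_le hs ht (by linarith)
  have hmono : (1 - (s + t))⁻¹ ≤ (1 - r)⁻¹ := inv_anti₀ (by linarith) (by linarith)
  have hr' : r / (1 - r) = (1 - r)⁻¹ - 1 := by
    field_simp [(by linarith : (1 - r) ≠ 0)]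
    ring
  linarith

/-- Global-CSI outage-exponent optimization for the half-duplex parallel relay
channel: for `0 ≤ r ≤ 1/2`, the infimum of `4 − α − β − γ − δ` over the region
`f(α,β) + f(γ,δ) ≤ r` equals `2 − r/(1−r)`. -/
theorem global_csi_parallel_relay (r : ℝ) (hr0 : 0 ≤ r) (hr : r ≤ 1/2) :
    sInf {d : ℝ | ∃ α β γ δ : ℝ,
        α ∈ Set.Icc (0:ℝ) 1 ∧ β ∈ Set.Icc (0:ℝ) 1 ∧
        γ ∈ Set.Icc (0:ℝ) 1 ∧ δ ∈ Set.Icc (0:ℝ) 1 ∧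
        cutRate α β + cutRate γ δ ≤ r ∧
        d = 4 - α - β - γ - δ} = 2 - r / (1 - r) := by
  have hr1 : r < 1 := by linarith
  refine IsLeast.csInf_eq ⟨⟨1, r / (1 - r), 1, 0, ?_, ?_, ?_, ?_, ?_, by ring⟩, ?_⟩
  · exact ⟨zero_le_one, le_rfl⟩
  · exact ⟨by have := sub_pos.2 hr1; positivity, by rw [div_le_one (by linarith)]; linarith⟩
  · exact ⟨zero_le_one, le_rfl⟩
  · exact ⟨le_rfl, zero_le_one⟩
  · rw [cutRate_one_left_div_one_sub hr0 hr1, cutRate_zero_right, add_zero]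
  · rintro d ⟨α, β, γ, δ, hα, hβ, hγ, hδ, hcut, rfl⟩
    have := add_add_add_le_of_cutRate_add_cutRate_le hα.2 hβ.2 hγ.2 hδ.2
      (cutRate_nonneg hα.1 hβ.1) (cutRate_nonneg hγ.1 hδ.1) hr1 hcut
    linarith
end

section
/- Let α, β, γ, δ ≥ 0 be real numbers, and define f(x,y) = x·y/(x + y) for x + y > 0 and f(0,0) = 0. Then the supremum over (t₁, t₂) ∈ [0,1]² of min( t₁·α + t₂·γ , t₁·α + (1 − t₂)·δ , t₂·γ + (1 − t₁)·β , (1 − t₁)·β + (1 − t₂)·δ ) equals f(α, β) + f(γ, δ). -/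
/-!
Since `min a b + min c d` is the minimum of the four pairwise sums, the objective splits as
`min (t₁ α) ((1 - t₁) β) + min (t₂ γ) ((1 - t₂) δ)`, so the two relays can be optimized
separately. For one relay, `min (t α) ((1 - t) β)` is at most the weighted mean with weights
`β, α`, which is `αβ/(α+β)`, and equality holds at the balancing point `t = β/(α+β)`.
-/

/-- The rate through a single relay that listens for a fraction `t` of the time. -/
def relayRate (α β t : ℝ) : ℝ := min (t * α) ((1 - t) * β)

lemma min_add_min_eq {M : Type*} [LinearOrder M] [AddCommMagma M] [AddLeftMono M]
    [AddRightMono M] (a b c d : M) :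
    min a b + min c d = min (min (a + c) (a + d)) (min (c + b) (b + d)) := by
  rw [min_add, add_min, add_min, add_comm c b, min_min_min_comm]

section

variable {α β : ℝ}

lemma relayRate_le_cutRate (hα : 0 ≤ α) (hβ : 0 ≤ β) (t : ℝ) :
    relayRate α β t ≤ cutRate α β := by
  rcases (add_nonneg hα hβ).eq_or_lt with h | h
  · obtain ⟨rfl, rfl⟩ : α = 0 ∧ β = 0 := ⟨by linarith, by linarith⟩
    simp [relayRate, cutRate]
  · rw [cutRate, if_pos h, le_div_iff₀ h]
    calc relayRate α β t * (α + β) = β * relayRate α β t + α * relayRate α β t := by ring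
      _ ≤ β * (t * α) + α * ((1 - t) * β) := by
        gcongr
        exacts [min_le_left _ _, min_le_right _ _]
      _ = α * β := by ring

/-- When `α = β = 0` the balancing point is `0 / 0 = 0`, where the identity still holds. -/
lemma relayRate_balance (hα : 0 ≤ α) (hβ : 0 ≤ β) :
    relayRate α β (β / (α + β)) = cutRate α β := by
  rcases (add_nonneg hα hβ).eq_or_lt with h | h
  · obtain ⟨rfl, rfl⟩ : α = 0 ∧ β = 0 := ⟨by linarith, by linarith⟩
    simp [relayRate, cutRate]
  · have hbal : β / (α + β) * α = α * β / (α + β) := by ring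
    have hbal' : (1 - β / (α + β)) * β = α * β / (α + β) := by field_simp; ring
    rw [relayRate, hbal, hbal', min_self, cutRate, if_pos h]

lemma isGreatest_relayRate (hα : 0 ≤ α) (hβ : 0 ≤ β) :
    IsGreatest (relayRate α β '' Set.Icc 0 1) (cutRate α β) := by
  refine ⟨⟨β / (α + β), ⟨by positivity, ?_⟩, relayRate_balance hα hβ⟩, ?_⟩
  · exact div_le_one_of_le₀ (le_add_of_nonneg_left hα) (add_nonneg hα hβ)
  · rintro _ ⟨t, -, rfl⟩
    exact relayRate_le_cutRate hα hβ t

end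

/-- The optimal cut-set multiplexing rate of the half-duplex parallel relay
channel with globally optimized listening fractions `(t₁, t₂) ∈ [0,1]²` equals
`f(α,β) + f(γ,δ)`. -/
theorem optimal_cutset_rate (α β γ δ : ℝ)
    (hα : 0 ≤ α) (hβ : 0 ≤ β) (hγ : 0 ≤ γ) (hδ : 0 ≤ δ) :
    sSup {m : ℝ | ∃ t₁ ∈ Set.Icc (0:ℝ) 1, ∃ t₂ ∈ Set.Icc (0:ℝ) 1,
        m = min (min (t₁ * α + t₂ * γ) (t₁ * α + (1 - t₂) * δ))
                (min (t₂ * γ + (1 - t₁) * β) ((1 - t₁) * β + (1 - t₂) * δ))} =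
      cutRate α β + cutRate γ δ := by
  obtain ⟨⟨t₁, ht₁, hrate₁⟩, hub₁⟩ := isGreatest_relayRate hα hβ
  obtain ⟨⟨t₂, ht₂, hrate₂⟩, hub₂⟩ := isGreatest_relayRate hγ hδ
  refine IsGreatest.csSup_eq ⟨⟨t₁, ht₁, t₂, ht₂, ?_⟩, ?_⟩
  · rw [← hrate₁, ← hrate₂]
    exact min_add_min_eq _ _ _ _
  · rintro _ ⟨s₁, hs₁, s₂, hs₂, rfl⟩
    rw [← min_add_min_eq]
    exact add_le_add (hub₁ ⟨s₁, hs₁, rfl⟩) (hub₂ ⟨s₂, hs₂, rfl⟩)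
end
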